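/- Reduction from Max-Reward-Light (XOS case): Let (A, f, c) be a multi-agent contract instance with XOS f, let B, B' ∈ (0,1] be budgets, let γ ≥ 1, and let L be the set of light agents. Consider the scaled instance on the agent set L with the same reward f (restricted to subsets of L) and costs c'_i = (B'/B)·c_i; its payment function is p'(T) = Σ_{i∈T} c'_i/f_T(i) for T ⊆ L and its profit is g'(T) = (1 − p'(T))·f(T). Let φ' : 2^L → ℝ≥0 be a BEST objective for the scaled instance. Suppose S ⊆ L satisfies p'(S) ≤ B' and γ·φ'(S) ≥ max{φ'(T) : T ⊆ L, p'(T) ≤ B'}. Then there exists a set T ⊆ L with p(T) ≤ B (payment in the original instance), where T = S or T is a singleton, such that 20γ·f(T) ≥ Max-Reward-Light(B). -/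

import Mathlib

open scoped BigOperators ENNReal
open Finset

/-- Marginal contribution of agent `i` to set `S`: `f_S(i) = f(S) - f(S \ {i})`. -/
noncomputable def marginal {α : Type*} [DecidableEq α] (f : Finset α → ℝ) (S : Finset α)
    (i : α) : ℝ :=
  f S - f (S.erase i)

/-- Payment needed to incentivize `S`, valued in `[0,∞]`, with the conventions
`0/0 = 0` and `x/0 = ∞` for `x > 0` (these hold for ENNReal division). -/
noncomputable def payment {α : Type*} [DecidableEq α] (f : Finset α → ℝ) (c : α → ℝ)
    (S : Finset α) : ℝ≥0∞ :=
  ∑ i ∈ S, ENNReal.ofReal (c i) / ENNReal.ofReal (marginal f S i)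

/-- The principal's profit from incentivizing `S`: `g(S) = (1 - p(S)) · f(S)`. -/
noncomputable def profit {α : Type*} [DecidableEq α] (f : Finset α → ℝ) (c : α → ℝ)
    (S : Finset α) : ℝ :=
  (1 - (payment f c S).toReal) * f S

/-- `f` is monotone. -/
def IsMonotoneFn {α : Type*} (f : Finset α → ℝ) : Prop :=
  ∀ ⦃S T : Finset α⦄, S ⊆ T → f S ≤ f T

/-- `f` is subadditive. -/
def IsSubadditive {α : Type*} [DecidableEq α] (f : Finset α → ℝ) : Prop :=
  ∀ S T : Finset α, f (S ∪ T) ≤ f S + f T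

/-- `f` is submodular (decreasing marginal values). -/
def IsSubmodular {α : Type*} [DecidableEq α] (f : Finset α → ℝ) : Prop :=
  ∀ ⦃S T : Finset α⦄, S ⊆ T → ∀ i ∉ T, f (insert i T) - f T ≤ f (insert i S) - f S

/-- `f` is additive. -/
def IsAdditive {α : Type*} [DecidableEq α] (f : Finset α → ℝ) : Prop :=
  ∀ S : Finset α, f S = ∑ i ∈ S, f {i}

/-- `f` is XOS: a finite max of nonnegative additive functions. -/
def IsXOS {α : Type*} (f : Finset α → ℝ) : Prop :=
  ∃ (k : ℕ) (a : Fin (k + 1) → α → ℝ),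
    (∀ j i, 0 ≤ a j i) ∧
    ∀ S : Finset α, f S = Finset.univ.sup' Finset.univ_nonempty (fun j => ∑ i ∈ S, a j i)

/-- Agent `i` is light: it can be incentivized with payment at most `1/2`. -/
def isLight {α : Type*} [DecidableEq α] (f : Finset α → ℝ) (c : α → ℝ) (i : α) : Prop :=
  payment f c {i} ≤ ENNReal.ofReal (1 / 2)

/-- `S` is budget-feasible for budget `B`. -/
def feasible {α : Type*} [DecidableEq α] (f : Finset α → ℝ) (c : α → ℝ) (B : ℝ)
    (S : Finset α) : Prop :=
  payment f c S ≤ ENNReal.ofReal B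

/-- `S` is a budget-feasible set of light agents. -/
def feasibleLight {α : Type*} [DecidableEq α] (f : Finset α → ℝ) (c : α → ℝ) (B : ℝ)
    (S : Finset α) : Prop :=
  (∀ i ∈ S, isLight f c i) ∧ payment f c S ≤ ENNReal.ofReal B

/-- The maximum (supremum) value of objective `φ` over sets satisfying `P`. -/
noncomputable def maxVal {α : Type*} (φ : Finset α → ℝ) (P : Finset α → Prop) : ℝ :=
  sSup (φ '' {S | P S})

/-- `φ` is a BEST objective for the instance `(f, c)`: it is nonnegative, sandwiched between
profit and reward, and satisfies `φ(S) ≤ f(S \ {i}) + φ({i})` for `i ∈ S`. -/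
def IsBEST {α : Type*} [DecidableEq α] (f : Finset α → ℝ) (c : α → ℝ)
    (φ : Finset α → ℝ) : Prop :=
  (∀ S, 0 ≤ φ S) ∧
  (∀ S, φ S ≤ f S) ∧
  (∀ S, payment f c S ≤ 1 → (1 - (payment f c S).toReal) * f S ≤ φ S) ∧
  (∀ S, ∀ i ∈ S, φ S ≤ f (S.erase i) + φ {i})

/-- `φ` is a BEST objective for the instance `(f, c)` restricted to sets satisfying `P`. -/
def IsBESTOn {α : Type*} [DecidableEq α] (f : Finset α → ℝ) (c : α → ℝ)
    (P : Finset α → Prop) (φ : Finset α → ℝ) : Prop :=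
  (∀ S, P S → 0 ≤ φ S) ∧
  (∀ S, P S → φ S ≤ f S) ∧
  (∀ S, P S → payment f c S ≤ 1 → (1 - (payment f c S).toReal) * f S ≤ φ S) ∧
  (∀ S, P S → ∀ i ∈ S, φ S ≤ f (S.erase i) + φ {i})


/-!
Let `OPT` be Max-Reward-Light(B). If some individually affordable light agent alone is worth
`OPT / (20γ)`, it is the answer. Otherwise every such agent is worth less than `OPT / 20`. Fix a feasible light `T` and an XOS
clause `a` supporting `f` at `T`. Since `f_T(i) ≤ a i`, the weights `c i / a i` sum to at most
`B`, and greedy rounding of the fractional knapsack (by density) yields `P ⊆ T` of weight at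
most `3B/10` with `a(P) ≥ 3/10 · f(T) - OPT/20`. A maximiser `U ⊆ P` of `f - a/2` has all
marginals at least `a i / 2`, so `p(U) ≤ 3B/5` and `f(U) ≥ a(P)/2`. In the scaled instance `U`
is feasible with payment at most `3/5`, so `2/5 · f(U) ≤ φ'(U) ≤ γ φ'(S) ≤ γ f(S)`. Hence
`f(T) ≤ 50/3 · γ f(S) + OPT/6` for every such `T`, and taking the supremum gives
`OPT ≤ 20γ f(S)`.
-/

section Payment

variable {α : Type*} [DecidableEq α] {f : Finset α → ℝ} {c : α → ℝ}

theorem payment_const_mul {r : ℝ} (hr : 0 ≤ r) (T : Finset α) :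
    payment f (fun i => r * c i) T = ENNReal.ofReal r * payment f c T := by
  simp only [payment, mul_sum, ENNReal.ofReal_mul hr, mul_div_assoc]

theorem payment_div_mul_le_ofReal_iff {B B' : ℝ} (hB : 0 < B) (hB' : 0 < B') (T : Finset α) :
    payment f (fun i => B' / B * c i) T ≤ ENNReal.ofReal B' ↔
      payment f c T ≤ ENNReal.ofReal B := by
  have hr : 0 < B' / B := div_pos hB' hB
  rw [payment_const_mul hr.le, ← div_mul_cancel₀ B' hB.ne', ENNReal.ofReal_mul hr.le,
    div_mul_cancel₀ B' hB.ne', ENNReal.mul_le_mul_iff_right (by simpa using hr)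
    ENNReal.ofReal_ne_top]

theorem sum_div_le_payment {m : α → ℝ} {T : Finset α} (hm : ∀ i ∈ T, marginal f T i ≤ m i) :
    ∑ i ∈ T, ENNReal.ofReal (c i) / ENNReal.ofReal (m i) ≤ payment f c T :=
  sum_le_sum fun i hi => ENNReal.div_le_div_left (ENNReal.ofReal_le_ofReal (hm i hi)) _

theorem payment_le_sum_div {m : α → ℝ} {U : Finset α} (hm : ∀ i ∈ U, m i ≤ marginal f U i) :
    payment f c U ≤ ∑ i ∈ U, ENNReal.ofReal (c i) / ENNReal.ofReal (m i) :=
  sum_le_sum fun i hi => ENNReal.div_le_div_left (ENNReal.ofReal_le_ofReal (hm i hi)) _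

theorem payment_singleton_le_of_mem {T : Finset α} {i : α} (hi : i ∈ T)
    (hm : marginal f T i ≤ marginal f {i} i) : payment f c {i} ≤ payment f c T := by
  rw [payment, sum_singleton]
  exact (ENNReal.div_le_div_left (ENNReal.ofReal_le_ofReal hm) _).trans
    (single_le_sum (f := fun j => ENNReal.ofReal (c j) / ENNReal.ofReal (marginal f T j))
      (fun _ _ => zero_le) hi)

end Payment

theorem exists_subset_sum_le_and_mul_sum_le {ι : Type*} [DecidableEq ι] (v w : ι → ℝ) {κ : ℝ}
    (hκ : 0 ≤ κ) (T : Finset ι) (hv : ∀ i ∈ T, 0 ≤ v i) (hw : ∀ i ∈ T, 0 ≤ w i)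
    (hvκ : ∀ i ∈ T, v i ≤ κ) {μ W : ℝ} (hμ : 0 ≤ μ) (hμW : μ ≤ W) (hTW : ∑ i ∈ T, w i ≤ W) :
    ∃ P ⊆ T, ∑ i ∈ P, w i ≤ μ ∧ μ * ∑ i ∈ T, v i ≤ W * (∑ i ∈ P, v i + κ) := by
  induction T using Finset.strongInduction generalizing μ W with
  | H T ih =>
  have hW : 0 ≤ W := hμ.trans hμW
  rcases T.eq_empty_or_nonempty with rfl | hne
  · exact ⟨∅, empty_subset _, by simpa using hμ, by simpa using mul_nonneg hW hκ⟩
  have sub {p : ι → Prop} {i : ι} (h : ∀ j ∈ T, p j) : ∀ j ∈ T.erase i, p j :=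
    fun j hj => h j (mem_of_mem_erase hj)
  by_cases hzero : ∃ i ∈ T, w i = 0
  · obtain ⟨i, hi, hwi⟩ := hzero
    obtain ⟨P, hPT, hPw, hPv⟩ := ih (T.erase i) (erase_ssubset hi) (sub hv) (sub hw) (sub hvκ)
      hμ hμW (by rwa [sum_erase T hwi])
    have hiP : i ∉ P := fun h => notMem_erase i T (hPT h)
    refine ⟨insert i P, insert_subset hi (hPT.trans (erase_subset i T)), ?_, ?_⟩
    · rwa [sum_insert hiP, hwi, zero_add]
    · rw [sum_insert hiP, ← add_sum_erase T v hi]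
      nlinarith [mul_le_mul_of_nonneg_right hμW (hv i hi)]
  push Not at hzero
  have hpos : ∀ j ∈ T, 0 < w j := fun j hj => (hw j hj).lt_of_ne (hzero j hj).symm
  obtain ⟨i, hi, hmax⟩ := T.exists_max_image (fun j => v j / w j) hne
  have hdens : (∑ j ∈ T, v j) * w i ≤ v i * W := calc
    (∑ j ∈ T, v j) * w i ≤ ∑ j ∈ T, v i * w j := by
      rw [sum_mul]
      exact sum_le_sum fun j hj => (div_le_div_iff₀ (hpos j hj) (hpos i hi)).1 (hmax j hj)
    _ = v i * ∑ j ∈ T, w j := (mul_sum ..).symm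
    _ ≤ v i * W := mul_le_mul_of_nonneg_left hTW (hv i hi)
  rcases lt_or_ge μ (w i) with hμi | hiμ
  · refine ⟨∅, empty_subset _, by simpa using hμ, ?_⟩
    rw [sum_empty, zero_add]
    nlinarith [mul_le_mul_of_nonneg_right hμi.le (sum_nonneg hv),
      mul_le_mul_of_nonneg_left (hvκ i hi) hW]
  obtain ⟨P, hPT, hPw, hPv⟩ := ih (T.erase i) (erase_ssubset hi) (sub hv) (sub hw) (sub hvκ)
    (μ := μ - w i) (W := W - w i) (sub_nonneg.2 hiμ) (by linarith)
    (by linarith [sum_erase_add T w hi])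
  have hiP : i ∉ P := fun h => notMem_erase i T (hPT h)
  refine ⟨insert i P, insert_subset hi (hPT.trans (erase_subset i T)), ?_, ?_⟩
  · rw [sum_insert hiP]; linarith
  rw [sum_insert hiP]
  rw [← add_sum_erase T v hi] at hdens ⊢
  have hX : 0 ≤ ∑ j ∈ P, v j := sum_nonneg fun j hj => hv j (mem_of_mem_erase (hPT hj))
  rcases (sub_nonneg.2 (hiμ.trans hμW)).eq_or_lt with h | h
  · obtain rfl : W = w i := by linarith
    obtain rfl : μ = w i := by linarith
    nlinarith [mul_nonneg hW (add_nonneg hX hκ)]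
  · nlinarith [mul_nonneg (sub_nonneg.2 hμW) (sub_nonneg.2 hdens)]

theorem exists_subset_le_marginal {α : Type*} [DecidableEq α] (f : Finset α → ℝ) (a : α → ℝ)
    (P : Finset α) :
    ∃ U ⊆ P, f P - ∑ i ∈ P, a i ≤ f U - ∑ i ∈ U, a i ∧ ∀ i ∈ U, a i ≤ marginal f U i := by
  obtain ⟨U, hU, hmax⟩ := P.powerset.exists_max_image (fun V => f V - ∑ i ∈ V, a i)
    ⟨∅, empty_mem_powerset P⟩
  rw [mem_powerset] at hU
  refine ⟨U, hU, hmax P (mem_powerset_self P), fun i hi => ?_⟩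
  have := hmax (U.erase i) (mem_powerset.2 ((erase_subset i U).trans hU))
  have := sum_erase_add U a hi
  rw [marginal]
  linarith

section XOS

variable {α : Type*} {f : Finset α → ℝ}

theorem IsXOS.apply_empty (hf : IsXOS f) : f ∅ = 0 := by
  obtain ⟨k, a, -, hfa⟩ := hf
  simp [hfa]

theorem IsXOS.exists_supporting (hf : IsXOS f) (T : Finset α) :
    ∃ a : α → ℝ, (∀ i, 0 ≤ a i) ∧ (∀ V, ∑ i ∈ V, a i ≤ f V) ∧ f T = ∑ i ∈ T, a i := by
  obtain ⟨k, a, ha0, hfa⟩ := hf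
  obtain ⟨j, -, hj⟩ := exists_mem_eq_sup' univ_nonempty fun j => ∑ i ∈ T, a j i
  exact ⟨a j, ha0 j, fun V => (hfa V).symm ▸ le_sup' (fun j => ∑ i ∈ V, a j i) (mem_univ j),
    (hfa T).trans hj⟩

variable [DecidableEq α]

theorem marginal_le_of_supporting {a : α → ℝ} (ha : ∀ V, ∑ i ∈ V, a i ≤ f V) {T : Finset α}
    (hT : f T = ∑ i ∈ T, a i) {i : α} (hi : i ∈ T) : marginal f T i ≤ a i := by
  have := ha (T.erase i)
  rw [marginal, hT, ← sum_erase_add T a hi]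
  linarith

theorem IsXOS.exists_subset_payment_le (hf : IsXOS f) {c : α → ℝ} {B μ κ : ℝ} (hμ : 0 ≤ μ)
    (hμB : μ ≤ B) (hκ : 0 ≤ κ) {T : Finset α} (hT : payment f c T ≤ ENNReal.ofReal B)
    (hsmall : ∀ i ∈ T, payment f c {i} ≤ ENNReal.ofReal B → f {i} ≤ κ) :
    ∃ U ⊆ T, payment f c U ≤ ENNReal.ofReal (2 * μ) ∧ μ * f T ≤ B * (2 * f U + κ) := by
  obtain ⟨a, ha0, haf, hfT⟩ := hf.exists_supporting T
  have hmarg : ∀ i ∈ T, marginal f T i ≤ a i := fun i hi => marginal_le_of_supporting haf hfT hi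
  have ha1 : ∀ i, a i ≤ marginal f {i} i := fun i => by
    simpa [marginal, hf.apply_empty] using haf {i}
  have haκ : ∀ i ∈ T, a i ≤ κ := fun i hi =>
    ((ha1 i).trans_eq (by simp [marginal, hf.apply_empty])).trans <| hsmall i hi <|
      (payment_singleton_le_of_mem hi ((hmarg i hi).trans (ha1 i))).trans hT
  set ω : α → ℝ≥0∞ := fun i => ENNReal.ofReal (c i) / ENNReal.ofReal (a i)
  have hωT : ∑ i ∈ T, ω i ≤ ENNReal.ofReal B := (sum_div_le_payment hmarg).trans hT
  have hωfin : ∀ i ∈ T, ω i ≠ ⊤ :=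
    ENNReal.sum_ne_top.1 (ne_top_of_le_ne_top ENNReal.ofReal_ne_top hωT)
  have hwT : ∑ i ∈ T, (ω i).toReal ≤ B := by
    rw [← ENNReal.toReal_sum hωfin]
    exact ENNReal.toReal_le_of_le_ofReal (hμ.trans hμB) hωT
  obtain ⟨P, hPT, hPw, hPa⟩ := exists_subset_sum_le_and_mul_sum_le a (fun i => (ω i).toReal) hκ T
    (fun i _ => ha0 i) (fun i _ => ENNReal.toReal_nonneg) haκ hμ hμB hwT
  obtain ⟨U, hUP, hPU, hUmarg⟩ := exists_subset_le_marginal f (fun i => a i / 2) P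
  refine ⟨U, hUP.trans hPT, ?_, ?_⟩
  · calc payment f c U
        ≤ ∑ i ∈ U, ENNReal.ofReal (c i) / ENNReal.ofReal (a i / 2) := payment_le_sum_div hUmarg
      _ = ∑ i ∈ U, 2 * ω i := sum_congr rfl fun i _ => by
          rw [ENNReal.ofReal_div_of_pos two_pos, ENNReal.ofReal_ofNat,
            ← ENNReal.div_mul _ (Or.inr two_ne_zero) (Or.inr ENNReal.ofNat_ne_top), mul_comm]
      _ ≤ ∑ i ∈ P, 2 * ω i := sum_le_sum_of_subset hUP
      _ = ENNReal.ofReal (2 * ∑ i ∈ P, (ω i).toReal) := by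
          rw [ENNReal.ofReal_mul zero_le_two, ENNReal.ofReal_ofNat, ← mul_sum,
            ENNReal.ofReal_sum_of_nonneg fun i _ => ENNReal.toReal_nonneg]
          exact congrArg _ <| sum_congr rfl fun i hi =>
            (ENNReal.ofReal_toReal (hωfin i (hPT hi))).symm
      _ ≤ ENNReal.ofReal (2 * μ) := ENNReal.ofReal_le_ofReal (by linarith)
  · have hPU' : ∑ i ∈ P, a i ≤ 2 * f U := by
      simp only [← sum_div] at hPU
      linarith [haf P, sum_nonneg fun i (_ : i ∈ U) => ha0 i]
    calc μ * f T ≤ B * (∑ i ∈ P, a i + κ) := hfT ▸ hPa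
      _ ≤ B * (2 * f U + κ) := by gcongr; linarith

end XOS

section Objective

variable {α : Type*}

theorem le_maxVal {φ : Finset α → ℝ} {P : Finset α → Prop} {M : ℝ} (hM : ∀ S, P S → φ S ≤ M)
    {S : Finset α} (hS : P S) : φ S ≤ maxVal φ P :=
  le_csSup ⟨M, by rintro _ ⟨T, hT, rfl⟩; exact hM T hT⟩ ⟨S, hS, rfl⟩

theorem maxVal_le {φ : Finset α → ℝ} {P : Finset α → Prop} {M : ℝ} {S₀ : Finset α} (h₀ : P S₀)
    (hM : ∀ S, P S → φ S ≤ M) : maxVal φ P ≤ M :=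
  csSup_le ⟨_, S₀, h₀, rfl⟩ (by rintro _ ⟨T, hT, rfl⟩; exact hM T hT)

theorem IsBESTOn.one_sub_mul_le [DecidableEq α] {f : Finset α → ℝ} {c : α → ℝ}
    {P : Finset α → Prop} {φ : Finset α → ℝ} (hφ : IsBESTOn f c P φ) {U : Finset α} (hU : P U)
    {q : ℝ} (hq0 : 0 ≤ q) (hq1 : q ≤ 1) (hUq : payment f c U ≤ ENNReal.ofReal q) (hfU : 0 ≤ f U) :
    (1 - q) * f U ≤ φ U := by
  refine le_trans ?_ (hφ.2.2.1 U hU (hUq.trans (ENNReal.ofReal_le_one.2 hq1)))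
  gcongr
  exact ENNReal.toReal_le_of_le_ofReal hq0 hUq

end Objective

theorem reduction_from_mrl_xos_general {α : Type*} [DecidableEq α]
    (f : Finset α → ℝ) (c : α → ℝ) (φ' : Finset α → ℝ)
    (hf01 : ∀ S, f S ∈ Set.Icc (0 : ℝ) 1)
    (hxos : IsXOS f)
    (B B' : ℝ) (hB0 : 0 < B) (hB'0 : 0 < B') (hB'1 : B' ≤ 1)
    (γ : ℝ) (hγ : 1 ≤ γ)
    (hφ' : IsBESTOn f (fun i => (B' / B) * c i) (fun S => ∀ i ∈ S, isLight f c i) φ')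
    (S : Finset α) (hSL : ∀ i ∈ S, isLight f c i)
    (hSfeas : payment f (fun i => (B' / B) * c i) S ≤ ENNReal.ofReal B')
    (hSapprox :
      maxVal φ' (fun T => (∀ i ∈ T, isLight f c i) ∧
        payment f (fun i => (B' / B) * c i) T ≤ ENNReal.ofReal B') ≤ γ * φ' S) :
    ∃ T : Finset α,
      (∀ i ∈ T, isLight f c i) ∧
      payment f c T ≤ ENNReal.ofReal B ∧
      (T = S ∨ T.card = 1) ∧
      maxVal f (feasibleLight f c B) ≤ 20 * γ * f T := by
  set OPT := maxVal f (feasibleLight f c B)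
  have hscaled := payment_div_mul_le_ofReal_iff (f := f) (c := c) hB0 hB'0
  by_cases hsing : ∃ i, isLight f c i ∧ payment f c {i} ≤ ENNReal.ofReal B ∧ OPT ≤ 20 * γ * f {i}
  · obtain ⟨i, hiL, hiB, hiOPT⟩ := hsing
    exact ⟨{i}, by simpa using hiL, hiB, Or.inr (card_singleton i), hiOPT⟩
  push Not at hsing
  refine ⟨S, hSL, (hscaled S).1 hSfeas, Or.inl rfl, ?_⟩
  have hempty : feasibleLight f c B ∅ := ⟨by simp, by simp [payment]⟩
  have hOPT0 : 0 ≤ OPT := (hf01 ∅).1.trans (le_maxVal (fun T _ => (hf01 T).2) hempty)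
  suffices ∀ T, feasibleLight f c B T → f T ≤ 50 / 3 * (γ * f S) + OPT / 6 by
    linarith [maxVal_le hempty this]
  rintro T ⟨hTL, hTB⟩
  obtain ⟨U, hUT, hUB', hTU⟩ := hxos.exists_subset_payment_le (μ := 3 / 10 * B') (κ := OPT / 20)
    (by positivity) (by linarith) (by positivity) ((hscaled T).2 hTB) fun i hi hiB' => by
      nlinarith [hsing i (hTL i hi) ((hscaled {i}).1 hiB'), (hf01 {i}).1]
  have hUL : ∀ i ∈ U, isLight f c i := fun i hi => hTL i (hUT hi)
  have hφU := hφ'.one_sub_mul_le hUL (q := 2 * (3 / 10 * B')) (by positivity) (by linarith) hUB'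
    (hf01 U).1
  have hUS : φ' U ≤ γ * f S :=
    (le_maxVal (fun V hV => (hφ'.2.1 V hV.1).trans (hf01 V).2)
      ⟨hUL, hUB'.trans (ENNReal.ofReal_le_ofReal (by linarith))⟩).trans
      (hSapprox.trans (mul_le_mul_of_nonneg_left (hφ'.2.1 S hSL) (by linarith)))
  have hTU' : 3 / 10 * f T ≤ 2 * f U + OPT / 20 :=
    le_of_mul_le_mul_left (by linarith) hB'0
  nlinarith [(hf01 U).1]

/-- **Reduction from Max-Reward-Light (XOS case).**
The scaled instance lives on the set of light agents `L` (encoded by the predicate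
`∀ i ∈ S, isLight f c i`), with the same reward `f` and costs scaled by `B'/B`. -/
theorem reduction_from_mrl_xos {α : Type*} [DecidableEq α] [Fintype α]
    (f : Finset α → ℝ) (c : α → ℝ) (φ' : Finset α → ℝ)
    (hf01 : ∀ S, f S ∈ Set.Icc (0 : ℝ) 1) (hf0 : f ∅ = 0)
    (hxos : IsXOS f) (hc : ∀ i, 0 ≤ c i)
    (B B' : ℝ) (hB0 : 0 < B) (hB1 : B ≤ 1) (hB'0 : 0 < B') (hB'1 : B' ≤ 1)
    (γ : ℝ) (hγ : 1 ≤ γ)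
    (hφ' : IsBESTOn f (fun i => (B' / B) * c i) (fun S => ∀ i ∈ S, isLight f c i) φ')
    (S : Finset α) (hSL : ∀ i ∈ S, isLight f c i)
    (hSfeas : payment f (fun i => (B' / B) * c i) S ≤ ENNReal.ofReal B')
    (hSapprox :
      maxVal φ' (fun T => (∀ i ∈ T, isLight f c i) ∧
        payment f (fun i => (B' / B) * c i) T ≤ ENNReal.ofReal B') ≤ γ * φ' S) :
    ∃ T : Finset α,
      (∀ i ∈ T, isLight f c i) ∧
      payment f c T ≤ ENNReal.ofReal B ∧
      (T = S ∨ T.card = 1) ∧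
      maxVal f (feasibleLight f c B) ≤ 20 * γ * f T :=
  reduction_from_mrl_xos_general f c φ' hf01 hxos B B' hB0 hB'0 hB'1 γ hγ hφ' S hSL hSfeas hSapprox
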